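/- arXiv:2509.08708 — 5 statements merged into one kernel-verified Lean document; each statement's English description precedes it below -/
import Mathlib

section
/- Let X_u and X_v be independent random variables (the model-form-uncertainty parameters and the shared model parameters respectively), and let X̃_ũ be a random variable independent of X_v (an alternative model-form-uncertainty parametrization). Let f(X_u, X_v) and q(X̃_ũ, X_v) be square-integrable real-valued outputs of the two models. Fix ε₁, ε₂ > 0 and assume: (1) E[ |Var(f(X_u,X_v) | X_v) − Var(q(X̃_ũ,X_v) | X_v)| ] < ε₁ (the L¹ distance between the conditional variances given X_v); (2) |Var(f(X_u,X_v)) − Var(q(X̃_ũ,X_v))| < ε₂; (3) Var(f(X_u,X_v)) = 1, and Var(q(X̃_ũ,X_v)) > 0. Then the grouped first-order Sobol' indices of the model-form-uncertainty groups, S_u = Var(E[f(X_u,X_v) | X_v]) / Var(f(X_u,X_v)) and S_ũ = Var(E[q(X̃_ũ,X_v) | X_v]) / Var(q(X̃_ũ,X_v)) (each equal to one minus the grouped total index of the corresponding MFU group), satisfy |S_u − S_ũ| < ε₁ + 2ε₂. -/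
/-!
By the law of total variance, `Var E[f | X_v] = Var f - E[Var(f | X_v)]`, so with `Var f = 1` the
difference of the two indices is `b / Var q - a`, where `a` and `b` are the expected conditional
variances of `f` and `q`. Split it as `(b / Var q - b) + (b - a)`: since `0 ≤ b ≤ Var q`, the first
term is at most `|1 - Var q| < ε₂`, and the second is at most the `L¹` distance between the
conditional variances, which is `< ε₁`.
-/

open MeasureTheory ProbabilityTheory

/-- The conditional variance of a real random variable `f` given a sub-σ-algebra `m`:
`Var(f | m) = E[f² | m] − (E[f | m])²`. -/
noncomputable def cVar {Ω : Type*} (m : MeasurableSpace Ω) {m0 : MeasurableSpace Ω}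
    (μ : Measure Ω) (f : Ω → ℝ) : Ω → ℝ :=
  fun ω => (μ[fun ω' => f ω' ^ 2 | m]) ω - ((μ[f | m]) ω) ^ 2

section cVar

variable {Ω : Type*} {m m0 : MeasurableSpace Ω} {μ : Measure Ω} {f : Ω → ℝ}

lemma cVar_ae_eq_condVar [IsFiniteMeasure μ] (hm : m ≤ m0) (hf : MemLp f 2 μ) :
    cVar m μ f =ᵐ[μ] Var[f; μ | m] :=
  (condVar_ae_eq_condExp_sq_sub_sq_condExp hm hf).symm

lemma integrable_cVar [IsFiniteMeasure μ] (hm : m ≤ m0) (hf : MemLp f 2 μ) :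
    Integrable (cVar m μ f) μ :=
  integrable_condVar.congr (cVar_ae_eq_condVar hm hf).symm

lemma integral_cVar_nonneg [IsFiniteMeasure μ] (hm : m ≤ m0) (hf : MemLp f 2 μ) :
    0 ≤ ∫ ω, cVar m μ f ω ∂μ := by
  rw [integral_congr_ae (cVar_ae_eq_condVar hm hf)]
  exact integral_nonneg_of_ae (condExp_nonneg (Filter.Eventually.of_forall fun ω => sq_nonneg _))

lemma integral_cVar_add_variance_condExp [IsProbabilityMeasure μ] (hm : m ≤ m0)
    (hf : MemLp f 2 μ) :
    ∫ ω, cVar m μ f ω ∂μ + Var[μ[f | m]; μ] = Var[f; μ] := by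
  rw [integral_congr_ae (cVar_ae_eq_condVar hm hf)]
  exact integral_condVar_add_variance_condExp hm hf

end cVar

lemma abs_div_sub_le_abs_sub_add_abs_one_sub {a b w : ℝ} (hb : 0 ≤ b) (hbw : b ≤ w)
    (hw : 0 < w) : |b / w - a| ≤ |b - a| + |1 - w| := by
  have hbw' : |b / w - b| ≤ |1 - w| := by
    rw [show b / w - b = b / w * (1 - w) by field_simp, abs_mul,
      abs_of_nonneg (div_nonneg hb hw.le)]
    exact mul_le_of_le_one_left (abs_nonneg _) ((div_le_one hw).2 hbw)
  calc |b / w - a| = |(b / w - b) + (b - a)| := by ring_nf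
    _ ≤ |b / w - b| + |b - a| := abs_add_le _ _
    _ ≤ |b - a| + |1 - w| := by linarith

theorem sobol_first_order_robustness_general
    {Ω V : Type*} [MeasurableSpace Ω] [MeasurableSpace V] {μ : Measure Ω} [IsProbabilityMeasure μ]
    (Xv : Ω → V) (hXv : Measurable Xv) (f q : Ω → ℝ) (hfL2 : MemLp f 2 μ) (hqL2 : MemLp q 2 μ)
    (ε₁ ε₂ : ℝ)
    (h1 : ∫ ω, |cVar (MeasurableSpace.comap Xv inferInstance) μ f ω
        - cVar (MeasurableSpace.comap Xv inferInstance) μ q ω| ∂μ < ε₁)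
    (h2 : |variance f μ - variance q μ| < ε₂)
    (h3 : variance f μ = 1) (h4 : 0 < variance q μ) :
    |variance (μ[f | MeasurableSpace.comap Xv inferInstance]) μ / variance f μ
      - variance (μ[q | MeasurableSpace.comap Xv inferInstance]) μ / variance q μ|
      < ε₁ + 2 * ε₂ := by
  set m := MeasurableSpace.comap Xv inferInstance
  have hm : m ≤ _ := hXv.comap_le
  have hf_total : Var[μ[f | m]; μ] = 1 - ∫ ω, cVar m μ f ω ∂μ := by
    rw [← h3, ← integral_cVar_add_variance_condExp hm hfL2]; ring
  have hq_total : Var[μ[q | m]; μ] = Var[q; μ] - ∫ ω, cVar m μ q ω ∂μ := by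
    rw [← integral_cVar_add_variance_condExp hm hqL2]; ring
  have hq_condExp_nonneg := variance_nonneg (μ[q | m]) μ
  have hcVar_close : |∫ ω, cVar m μ q ω ∂μ - ∫ ω, cVar m μ f ω ∂μ| < ε₁ := by
    rw [abs_sub_comm, ← integral_sub (integrable_cVar hm hfL2) (integrable_cVar hm hqL2)]
    exact (abs_integral_le_integral_abs).trans_lt h1
  have hε₂' : |1 - variance q μ| < ε₂ := h3 ▸ h2
  calc _ = |(∫ ω, cVar m μ q ω ∂μ) / variance q μ - ∫ ω, cVar m μ f ω ∂μ| := by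
        rw [h3, hf_total, hq_total]
        congr 1
        field_simp
        ring
    _ ≤ |∫ ω, cVar m μ q ω ∂μ - ∫ ω, cVar m μ f ω ∂μ| + |1 - variance q μ| :=
        abs_div_sub_le_abs_sub_add_abs_one_sub (integral_cVar_nonneg hm hqL2) (by linarith) h4
    _ < ε₁ + 2 * ε₂ := by linarith [abs_nonneg (1 - variance q μ)]

/-- **Robustness of grouped first-order Sobol' indices to the MFU parametrization**
(Proposition 3.1).  If the conditional variances given the shared parameters `X_v` are
`ε₁`-close in `L¹` and the total variances are `ε₂`-close, with `Var f = 1`, then the grouped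
first-order Sobol' indices of the two MFU groups differ by less than `ε₁ + 2ε₂`. -/
theorem sobol_first_order_robustness
    {Ω U V U' : Type*} [MeasurableSpace Ω] [MeasurableSpace U] [MeasurableSpace V]
    [MeasurableSpace U'] {μ : Measure Ω} [IsProbabilityMeasure μ]
    (Xu : Ω → U) (Xv : Ω → V) (Xu' : Ω → U')
    (hXu : Measurable Xu) (hXv : Measurable Xv) (hXu' : Measurable Xu')
    (hUV : IndepFun Xu Xv μ) (hU'V : IndepFun Xu' Xv μ)
    (F : U × V → ℝ) (Q : U' × V → ℝ) (hF : Measurable F) (hQ : Measurable Q)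
    (f q : Ω → ℝ)
    (hf : f = fun ω => F (Xu ω, Xv ω)) (hq : q = fun ω => Q (Xu' ω, Xv ω))
    (hfL2 : MemLp f 2 μ) (hqL2 : MemLp q 2 μ)
    (ε₁ ε₂ : ℝ) (hε₁ : 0 < ε₁) (hε₂ : 0 < ε₂)
    (h1 : ∫ ω, |cVar (MeasurableSpace.comap Xv inferInstance) μ f ω
        - cVar (MeasurableSpace.comap Xv inferInstance) μ q ω| ∂μ < ε₁)
    (h2 : |variance f μ - variance q μ| < ε₂)
    (h3 : variance f μ = 1) (h4 : 0 < variance q μ) :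
    |variance (μ[f | MeasurableSpace.comap Xv inferInstance]) μ / variance f μ
      - variance (μ[q | MeasurableSpace.comap Xv inferInstance]) μ / variance q μ|
      < ε₁ + 2 * ε₂ :=
  sobol_first_order_robustness_general Xv hXv f q hfL2 hqL2 ε₁ ε₂ h1 h2 h3 h4
end

section
/- Let X_u, X_v, and X'_u be mutually independent random variables, with X'_u having the same distribution as X_u (an independent 'replicate' of the model-form-uncertainty group). Let f be a measurable function of the two groups such that f(X_u, X_v) is square-integrable. Then E[ f(X_u, X_v) · f(X'_u, X_v) ] = E[ (E[ f(X_u, X_v) | X_v ])² ]. -/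
/-!
Write `F = f(X_u, X_v)` and `c = E[F | X_v]`. For independent `X ⊥ Y`, the conditional
expectation of `h(X, Y)` given `Y` is `y ↦ ∫ h(x, y) d(law X)` evaluated at `Y`, by
Fubini on the joint law `law X ⊗ law Y`. Applied once to `(X_u, X_v)` and once to
`(X'_u, (X_u, X_v))`, it shows that `E[f(X'_u, X_v) | X_u, X_v] = c`, because `X'_u` and
`X_u` have the same law. Two pull-outs then give `E[F · f(X'_u, X_v)] = E[F · c] = E[c²]`.
-/

open MeasureTheory ProbabilityTheory

theorem integral_mul_condExp_of_aestronglyMeasurable_left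
    {Ω : Type*} {m m₀ : MeasurableSpace Ω} {μ : Measure Ω} (hm : m ≤ m₀)
    [SigmaFinite (μ.trim hm)] {f g : Ω → ℝ} (hg : AEStronglyMeasurable[m] g μ)
    (hgf : Integrable (g * f) μ) (hf : Integrable f μ) :
    ∫ ω, g ω * (μ[f | m]) ω ∂μ = ∫ ω, g ω * f ω ∂μ :=
  calc ∫ ω, g ω * (μ[f | m]) ω ∂μ = ∫ ω, (μ[g * f | m]) ω ∂μ :=
        integral_congr_ae (condExp_mul_of_aestronglyMeasurable_left hg hgf hf).symm
    _ = ∫ ω, g ω * f ω ∂μ := integral_condExp hm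

theorem ProbabilityTheory.IndepFun.condExp_comp_prodMk_ae_eq
    {Ω α β E : Type*} [MeasurableSpace Ω] [MeasurableSpace α] [MeasurableSpace β]
    [NormedAddCommGroup E] [NormedSpace ℝ E] [CompleteSpace E]
    {μ : Measure Ω} [IsFiniteMeasure μ] {X : Ω → α} {Y : Ω → β}
    (hXY : IndepFun X Y μ) (hX : Measurable X) (hY : Measurable Y)
    {h : α × β → E} (hh : StronglyMeasurable h)
    (hint : Integrable (fun ω => h (X ω, Y ω)) μ) :
    μ[fun ω => h (X ω, Y ω) | MeasurableSpace.comap Y inferInstance]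
      =ᵐ[μ] fun ω => ∫ x, h (x, Y ω) ∂(μ.map X) := by
  set κ := μ.map X
  set ν := μ.map Y
  have hXY_meas : Measurable fun ω => (X ω, Y ω) := hX.prodMk hY
  have hlaw : μ.map (fun ω => (X ω, Y ω)) = κ.prod ν :=
    hXY.map_prod_eq_prod_map_map hX.aemeasurable hY.aemeasurable
  have hh_int : Integrable h (κ.prod ν) := by
    rw [← hlaw]
    exact (integrable_map_measure hh.aestronglyMeasurable hXY_meas.aemeasurable).mpr hint
  set G : β → E := fun y => ∫ x, h (x, y) ∂κ
  have hG : StronglyMeasurable G := hh.integral_prod_left'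
  have hGY_int : Integrable (fun ω => G (Y ω)) μ :=
    (integrable_map_measure hG.aestronglyMeasurable hY.aemeasurable).mp
      hh_int.integral_prod_right
  refine (ae_eq_condExp_of_forall_setIntegral_eq hY.comap_le hint
    (fun _ _ _ => hGY_int.integrableOn) ?_
    (hG.comp_measurable (Measurable.of_comap_le le_rfl)).aestronglyMeasurable).symm
  rintro _ ⟨t, ht, rfl⟩ -
  have hpre : (fun ω => (X ω, Y ω)) ⁻¹' (Set.univ ×ˢ t) = Y ⁻¹' t := by ext; simp
  calc ∫ ω in Y ⁻¹' t, G (Y ω) ∂μ = ∫ y in t, G y ∂ν :=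
        (setIntegral_map ht hG.aestronglyMeasurable hY.aemeasurable).symm
    _ = ∫ p in Set.univ ×ˢ t, h p ∂(κ.prod ν) := by
        have hrestr : (κ.prod ν).restrict (Set.univ ×ˢ t) = κ.prod (ν.restrict t) := by
          rw [← Measure.prod_restrict, Measure.restrict_univ]
        rw [hrestr, integral_prod_symm h (hrestr ▸ hh_int.restrict)]
    _ = ∫ ω in Y ⁻¹' t, h (X ω, Y ω) ∂μ := by
        rw [← hlaw, setIntegral_map (MeasurableSet.univ.prod ht) hh.aestronglyMeasurable
          hXY_meas.aemeasurable, hpre]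

/-- **Pick-freeze identity for the second moment of the conditional expectation.**
Let `X_u, X_v, X'_u` be mutually independent (encoded as `X_u ⊥ X_v` together with
`(X_u, X_v) ⊥ X'_u`), with `X'_u` distributed as `X_u`.  Then
`E[ f(X_u, X_v) · f(X'_u, X_v) ] = E[ (E[ f(X_u, X_v) | X_v ])² ]`. -/
theorem pick_freeze_second_moment
    {Ω U V : Type*} [MeasurableSpace Ω] [MeasurableSpace U] [MeasurableSpace V]
    {μ : Measure Ω} [IsProbabilityMeasure μ]
    (Xu Xu' : Ω → U) (Xv : Ω → V)
    (hXu : Measurable Xu) (hXu' : Measurable Xu') (hXv : Measurable Xv)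
    -- mutual independence of `X_u`, `X_v`, `X'_u`:
    (hUV : IndepFun Xu Xv μ)
    (hUVU' : IndepFun (fun ω => (Xu ω, Xv ω)) Xu' μ)
    -- `X'_u` is a replicate of `X_u`:
    (hid : IdentDistrib Xu' Xu μ μ)
    (f : U × V → ℝ) (hf : Measurable f)
    (hL2 : MemLp (fun ω => f (Xu ω, Xv ω)) 2 μ) :
    ∫ ω, f (Xu ω, Xv ω) * f (Xu' ω, Xv ω) ∂μ
      = ∫ ω, ((μ[fun ω' => f (Xu ω', Xv ω')
          | MeasurableSpace.comap Xv inferInstance]) ω) ^ 2 ∂μ := by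
  set F := fun ω => f (Xu ω, Xv ω)
  set F' := fun ω => f (Xu' ω, Xv ω)
  set c := μ[F | MeasurableSpace.comap Xv inferInstance]
  have hXuv : Measurable fun ω => (Xu ω, Xv ω) := hXu.prodMk hXv
  have hF' : MemLp F' 2 μ := by
    have hXu'Xv : IndepFun Xu' Xv μ := (hUVU'.comp measurable_snd measurable_id).symm
    exact ((hid.symm.prodMk (.refl hXv.aemeasurable) hUV hXu'Xv).comp hf).memLp_snd hL2
  have hc : μ[F' | MeasurableSpace.comap (fun ω => (Xu ω, Xv ω)) inferInstance] =ᵐ[μ] c := by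
    have h₁ := hUVU'.symm.condExp_comp_prodMk_ae_eq hXu' hXuv
      (h := fun p : U × (U × V) => f (p.1, p.2.2))
      (hf.comp (measurable_fst.prodMk measurable_snd.snd)).stronglyMeasurable
      (hF'.integrable one_le_two)
    have h₂ := hUV.condExp_comp_prodMk_ae_eq hXu hXv hf.stronglyMeasurable
      (hL2.integrable one_le_two)
    rw [hid.map_eq] at h₁
    exact h₁.trans h₂.symm
  calc ∫ ω, F ω * F' ω ∂μ
      = ∫ ω, F ω * (μ[F' | MeasurableSpace.comap (fun ω => (Xu ω, Xv ω)) inferInstance]) ω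
          ∂μ :=
        (integral_mul_condExp_of_aestronglyMeasurable_left hXuv.comap_le
          (hf.comp (Measurable.of_comap_le le_rfl)).aestronglyMeasurable
          (hL2.integrable_mul hF') (hF'.integrable one_le_two)).symm
    _ = ∫ ω, c ω * F ω ∂μ :=
        integral_congr_ae (hc.mono fun ω hω => by simp only [hω, mul_comm])
    _ = ∫ ω, c ω ^ 2 ∂μ := by
        simp_rw [sq]
        exact (integral_mul_condExp_of_aestronglyMeasurable_left hXv.comap_le
          stronglyMeasurable_condExp.aestronglyMeasurable
          ((hL2.condExp one_le_two).integrable_mul hL2) (hL2.integrable one_le_two)).symm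
end

section
/- Let X_u, X_v, and X'_u be mutually independent random variables, with X'_u having the same distribution as X_u (an independent 'replicate' of the model-form-uncertainty group). Let f be a measurable function of the two groups such that f(X_u, X_v) is square-integrable. Then the numerator of the grouped total Sobol' index satisfies the pick-freeze identity E[ Var(f(X_u, X_v) | X_v) ] = (1/2) · E[ ( f(X_u, X_v) − f(X'_u, X_v) )² ]. -/
open MeasureTheory ProbabilityTheory

/-! Since `X_u` is independent of `X_v`, conditioning `f(X_u, X_v)` on `X_v = v` amounts to
integrating out `X_u` against its law, so `Var(f(X_u, X_v) | X_v)` is `σ²(X_v)`, where `σ²(v)` is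
the variance of `f(X_u, v)`. On the other side, given `X_v = v` the variables `f(X_u, v)` and
`f(X'_u, v)` are independent copies, and `E(Z - Z')² = 2 Var Z` for independent copies; Fubini
over the law of `(X_v, X_u, X'_u)` then gives `E(f(X_u, X_v) - f(X'_u, X_v))² = 2 E[σ²(X_v)]`. -/

section PickFreeze

variable {Ω α β : Type*} [MeasurableSpace Ω] [MeasurableSpace α] [MeasurableSpace β]

theorem integral_sub_sq_prod_self {ν : Measure α} [IsProbabilityMeasure ν] {h : α → ℝ}
    (hh : MemLp h 2 ν) :
    ∫ p, (h p.1 - h p.2) ^ 2 ∂(ν.prod ν) = 2 * (∫ x, h x ^ 2 ∂ν - (∫ x, h x ∂ν) ^ 2) := by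
  have hsq : Integrable (fun x => h x ^ 2) ν := hh.integrable_sq
  have hint : Integrable h ν := hh.integrable one_le_two
  calc ∫ p, (h p.1 - h p.2) ^ 2 ∂(ν.prod ν)
      = ∫ p, (h p.1 ^ 2 + h p.2 ^ 2 - 2 * (h p.1 * h p.2)) ∂(ν.prod ν) := by
        congr 1; ext p; ring
    _ = ∫ p, h p.1 ^ 2 ∂(ν.prod ν) + ∫ p, h p.2 ^ 2 ∂(ν.prod ν)
          - 2 * ∫ p, h p.1 * h p.2 ∂(ν.prod ν) := by
        have hfst : Integrable (fun p : α × α => h p.1 ^ 2) (ν.prod ν) := hsq.comp_fst ν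
        have hsnd : Integrable (fun p : α × α => h p.2 ^ 2) (ν.prod ν) := hsq.comp_snd ν
        have hsum : Integrable (fun p : α × α => h p.1 ^ 2 + h p.2 ^ 2) (ν.prod ν) :=
          hfst.add hsnd
        rw [integral_sub hsum ((hint.mul_prod hint).const_mul 2),
          integral_add hfst hsnd, integral_const_mul]
    _ = 2 * (∫ x, h x ^ 2 ∂ν - (∫ x, h x ∂ν) ^ 2) := by
        rw [integral_fun_fst (fun x => h x ^ 2), integral_fun_snd (fun x => h x ^ 2),
          integral_prod_mul]
        simp only [probReal_univ, one_smul]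
        ring

theorem MemLp.prod_left_ae_two {μ : Measure α} {ν : Measure β} [SFinite μ] [SFinite ν]
    {f : α × β → ℝ} (hf : Measurable f) (hf2 : MemLp f 2 (μ.prod ν)) :
    ∀ᵐ y ∂ν, MemLp (fun x => f (x, y)) 2 μ := by
  filter_upwards [hf2.integrable_sq.prod_left_ae] with y hy
  exact (memLp_two_iff_integrable_sq (hf.comp measurable_prodMk_right).aestronglyMeasurable).mpr hy

/-- The variance of `x ↦ f (x, y)` under `ν`, written through moments rather than as
`ProbabilityTheory.variance` so that it is visibly measurable in `y`; the two agree whenever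
`x ↦ f (x, y)` is square integrable. -/
noncomputable def sliceVariance (ν : Measure α) (f : α × β → ℝ) (y : β) : ℝ :=
  ∫ x, f (x, y) ^ 2 ∂ν - (∫ x, f (x, y) ∂ν) ^ 2

theorem stronglyMeasurable_sliceVariance (ν : Measure α) [SFinite ν] {f : α × β → ℝ}
    (hf : Measurable f) : StronglyMeasurable (sliceVariance ν f) :=
  (hf.pow_const 2).stronglyMeasurable.integral_prod_left'.sub
    (hf.stronglyMeasurable.integral_prod_left'.pow 2)

theorem condExp_comap_ae_eq_integral_of_indepFun {E : Type*} [NormedAddCommGroup E]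
    [NormedSpace ℝ E] [CompleteSpace E] {μ : Measure Ω} [IsFiniteMeasure μ]
    {X : Ω → α} {Y : Ω → β} (hX : Measurable X) (hY : Measurable Y) (hXY : IndepFun X Y μ)
    {F : α × β → E} (hF : StronglyMeasurable F) (hFi : Integrable (fun ω => F (X ω, Y ω)) μ) :
    μ[fun ω => F (X ω, Y ω) | MeasurableSpace.comap Y inferInstance]
      =ᵐ[μ] fun ω => ∫ x, F (x, Y ω) ∂(μ.map X) := by
  have hlaw : μ.map (fun ω => (X ω, Y ω)) = (μ.map X).prod (μ.map Y) :=
    hXY.map_prod_eq_prod_map_map hX.aemeasurable hY.aemeasurable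
  have hXYm : Measurable fun ω => (X ω, Y ω) := hX.prodMk hY
  have hFlaw : Integrable F ((μ.map X).prod (μ.map Y)) := by
    rw [← hlaw]
    exact (integrable_map_measure hF.aestronglyMeasurable hXYm.aemeasurable).mpr hFi
  have hg : StronglyMeasurable fun y => ∫ x, F (x, y) ∂(μ.map X) := hF.integral_prod_left'
  have hgY : Integrable (fun ω => ∫ x, F (x, Y ω) ∂(μ.map X)) μ :=
    (integrable_map_measure hg.aestronglyMeasurable hY.aemeasurable).mp hFlaw.integral_prod_right
  refine (ae_eq_condExp_of_forall_setIntegral_eq hY.comap_le hFi (fun _ _ _ => hgY.integrableOn)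
    ?_ (hg.comp_measurable (comap_measurable Y)).aestronglyMeasurable).symm
  rintro s ⟨t, ht, rfl⟩ -
  calc ∫ ω in Y ⁻¹' t, ∫ x, F (x, Y ω) ∂(μ.map X) ∂μ
      = ∫ y in t, ∫ x, F (x, y) ∂(μ.map X) ∂(μ.map Y) :=
        (setIntegral_map ht hg.aestronglyMeasurable hY.aemeasurable).symm
    _ = ∫ p in Set.univ ×ˢ t, F p ∂((μ.map X).prod (μ.map Y)) := by
        rw [← Measure.prod_restrict, Measure.restrict_univ,
          integral_prod_symm F (hFlaw.mono_measure ?_)]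
        exact Measure.prod_mono le_rfl Measure.restrict_le_self
    _ = ∫ ω in Y ⁻¹' t, F (X ω, Y ω) ∂μ := by
        rw [← hlaw, setIntegral_map (MeasurableSet.univ.prod ht) hF.aestronglyMeasurable
          hXYm.aemeasurable, Set.mk_preimage_prod, Set.preimage_univ, Set.univ_inter]

theorem cVar_comap_ae_eq_sliceVariance {μ : Measure Ω} [IsFiniteMeasure μ]
    {X : Ω → α} {Y : Ω → β} (hX : Measurable X) (hY : Measurable Y) (hXY : IndepFun X Y μ)
    {f : α × β → ℝ} (hf : Measurable f) (hf2 : MemLp (fun ω => f (X ω, Y ω)) 2 μ) :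
    cVar (MeasurableSpace.comap Y inferInstance) μ (fun ω => f (X ω, Y ω))
      =ᵐ[μ] fun ω => sliceVariance (μ.map X) f (Y ω) := by
  filter_upwards [condExp_comap_ae_eq_integral_of_indepFun hX hY hXY
      (hf.pow_const 2).stronglyMeasurable hf2.integrable_sq,
    condExp_comap_ae_eq_integral_of_indepFun hX hY hXY hf.stronglyMeasurable
      (hf2.integrable one_le_two)] with ω hsq hmean
  simp only [cVar, sliceVariance, hmean]
  rw [← hsq]

theorem integral_cVar_comap_eq_integral_sliceVariance {μ : Measure Ω} [IsFiniteMeasure μ]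
    {X : Ω → α} {Y : Ω → β} (hX : Measurable X) (hY : Measurable Y) (hXY : IndepFun X Y μ)
    {f : α × β → ℝ} (hf : Measurable f) (hf2 : MemLp (fun ω => f (X ω, Y ω)) 2 μ) :
    ∫ ω, cVar (MeasurableSpace.comap Y inferInstance) μ (fun ω => f (X ω, Y ω)) ω ∂μ
      = ∫ y, sliceVariance (μ.map X) f y ∂(μ.map Y) := by
  rw [integral_congr_ae (cVar_comap_ae_eq_sliceVariance hX hY hXY hf hf2),
    integral_map hY.aemeasurable (stronglyMeasurable_sliceVariance _ hf).aestronglyMeasurable]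

theorem map_prodMk_prodMk_eq_prod_of_indepFun {γ : Type*} [MeasurableSpace γ] {μ : Measure Ω}
    [IsFiniteMeasure μ] {X : Ω → α} {Y : Ω → β} {X' : Ω → γ}
    (hX : Measurable X) (hY : Measurable Y) (hX' : Measurable X') (hXY : IndepFun X Y μ)
    (hXYX' : IndepFun (fun ω => (X ω, Y ω)) X' μ) :
    μ.map (fun ω => (Y ω, X ω, X' ω)) = (μ.map Y).prod ((μ.map X).prod (μ.map X')) := by
  have hlaw :
      μ.map (fun ω => ((X ω, Y ω), X' ω)) = ((μ.map X).prod (μ.map Y)).prod (μ.map X') := by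
    rw [hXYX'.map_prod_eq_prod_map_map (hX.prodMk hY).aemeasurable hX'.aemeasurable,
      hXY.map_prod_eq_prod_map_map hX.aemeasurable hY.aemeasurable]
  have hrearrange := (measurePreserving_prodAssoc (μ.map Y) (μ.map X) (μ.map X')).comp
    ((Measure.measurePreserving_swap (μ := μ.map X) (ν := μ.map Y)).prod
      (MeasurePreserving.id (μ.map X')))
  rw [← hrearrange.map_eq, ← hlaw, Measure.map_map hrearrange.measurable
    ((hX.prodMk hY).prodMk hX')]
  rfl

theorem identDistrib_prodMk_of_indepFun {μ : Measure Ω} [IsFiniteMeasure μ]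
    {X X' : Ω → α} {Y : Ω → β} (hX : Measurable X) (hX' : Measurable X') (hY : Measurable Y)
    (hXY : IndepFun X Y μ) (hXYX' : IndepFun (fun ω => (X ω, Y ω)) X' μ)
    (hid : IdentDistrib X' X μ μ) :
    IdentDistrib (fun ω => (X' ω, Y ω)) (fun ω => (X ω, Y ω)) μ μ where
  aemeasurable_fst := (hX'.prodMk hY).aemeasurable
  aemeasurable_snd := (hX.prodMk hY).aemeasurable
  map_eq := by
    have hX'Y : IndepFun X' Y μ := (hXYX'.comp measurable_snd measurable_id).symm
    rw [hX'Y.map_prod_eq_prod_map_map hX'.aemeasurable hY.aemeasurable,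
      hXY.map_prod_eq_prod_map_map hX.aemeasurable hY.aemeasurable, hid.map_eq]

theorem integral_sub_replicate_sq_eq_two_mul_integral_sliceVariance {μ : Measure Ω}
    [IsProbabilityMeasure μ]
    {X X' : Ω → α} {Y : Ω → β} (hX : Measurable X) (hX' : Measurable X') (hY : Measurable Y)
    (hXY : IndepFun X Y μ) (hXYX' : IndepFun (fun ω => (X ω, Y ω)) X' μ)
    (hid : IdentDistrib X' X μ μ) {f : α × β → ℝ} (hf : Measurable f)
    (hf2 : MemLp (fun ω => f (X ω, Y ω)) 2 μ) :
    ∫ ω, (f (X ω, Y ω) - f (X' ω, Y ω)) ^ 2 ∂μ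
      = 2 * ∫ y, sliceVariance (μ.map X) f y ∂(μ.map Y) := by
  have hlaw :
      μ.map (fun ω => (Y ω, X ω, X' ω)) = (μ.map Y).prod ((μ.map X).prod (μ.map X)) := by
    rw [map_prodMk_prodMk_eq_prod_of_indepFun hX hY hX' hXY hXYX', hid.map_eq]
  have hW : Measurable fun ω => (Y ω, X ω, X' ω) := hY.prodMk (hX.prodMk hX')
  have hF : Measurable fun q : β × α × α => (f (q.2.1, q.1) - f (q.2.2, q.1)) ^ 2 := by fun_prop
  have hf2' : MemLp (fun ω => f (X' ω, Y ω)) 2 μ :=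
    ((identDistrib_prodMk_of_indepFun hX hX' hY hXY hXYX' hid).comp hf).memLp_iff.mpr hf2
  have hFi : Integrable (fun q : β × α × α => (f (q.2.1, q.1) - f (q.2.2, q.1)) ^ 2)
      ((μ.map Y).prod ((μ.map X).prod (μ.map X))) := by
    rw [← hlaw]
    exact (integrable_map_measure hF.aestronglyMeasurable hW.aemeasurable).mpr
      (hf2.sub hf2').integrable_sq
  have hslices : ∀ᵐ y ∂(μ.map Y), MemLp (fun x => f (x, y)) 2 (μ.map X) := by
    refine MemLp.prod_left_ae_two hf ?_
    rw [← hXY.map_prod_eq_prod_map_map hX.aemeasurable hY.aemeasurable]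
    exact (memLp_map_measure_iff hf.aestronglyMeasurable (hX.prodMk hY).aemeasurable).mpr hf2
  rw [← integral_map hW.aemeasurable hF.aestronglyMeasurable, hlaw, integral_prod _ hFi,
    ← integral_const_mul]
  refine integral_congr_ae ?_
  have : IsProbabilityMeasure (μ.map X) := Measure.isProbabilityMeasure_map hX.aemeasurable
  filter_upwards [hslices] with y hy using integral_sub_sq_prod_self hy

end PickFreeze

/-- **Pick-freeze identity for the numerator of the grouped total Sobol' index.**
Let `X_u, X_v, X'_u` be mutually independent (encoded as `X_u ⊥ X_v` together with
`(X_u, X_v) ⊥ X'_u`), with `X'_u` distributed as `X_u`.  Then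
`E[ Var(f(X_u, X_v) | X_v) ] = (1/2) · E[ ( f(X_u, X_v) − f(X'_u, X_v) )² ]`. -/
theorem pick_freeze_total_index_numerator
    {Ω U V : Type*} [MeasurableSpace Ω] [MeasurableSpace U] [MeasurableSpace V]
    {μ : Measure Ω} [IsProbabilityMeasure μ]
    (Xu Xu' : Ω → U) (Xv : Ω → V)
    (hXu : Measurable Xu) (hXu' : Measurable Xu') (hXv : Measurable Xv)
    -- mutual independence of `X_u`, `X_v`, `X'_u`:
    (hUV : IndepFun Xu Xv μ)
    (hUVU' : IndepFun (fun ω => (Xu ω, Xv ω)) Xu' μ)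
    -- `X'_u` is a replicate of `X_u`:
    (hid : IdentDistrib Xu' Xu μ μ)
    (f : U × V → ℝ) (hf : Measurable f)
    (hL2 : MemLp (fun ω => f (Xu ω, Xv ω)) 2 μ) :
    ∫ ω, cVar (MeasurableSpace.comap Xv inferInstance) μ (fun ω' => f (Xu ω', Xv ω')) ω ∂μ
      = (1 / 2) * ∫ ω, (f (Xu ω, Xv ω) - f (Xu' ω, Xv ω)) ^ 2 ∂μ := by
  rw [integral_cVar_comap_eq_integral_sliceVariance hXu hXv hUV hf hL2,
    integral_sub_replicate_sq_eq_two_mul_integral_sliceVariance hXu hXu' hXv hUV hUVU' hid hf hL2]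
  ring
end

section
/- Let X_u, X_v, X'_u, X'_v be mutually independent random variables, with X'_u distributed as X_u and X'_v distributed as X_v (so that (X'_u, X'_v) is an independent replicate of (X_u, X_v)). Let f be a measurable function of the two groups such that f(X_u, X_v) is square-integrable. Then the numerator of the grouped first-order Sobol' index satisfies the pick-freeze identity Var( E[ f(X_u, X_v) | X_u ] ) = E[ f(X_u, X_v) · ( f(X_u, X'_v) − f(X'_u, X'_v) ) ]. -/
/-!
Put `g u = ∫ f (u, v) d(law X_v)`. Since `X_u` and `X_v` are independent,
`E[f(X_u, X_v) | X_u] = g(X_u)`, so the variance equals `E[g(X_u)²] - (E f(X_u, X_v))²`.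
Given `X_u`, the factors `f(X_u, X_v)` and `f(X_u, X'_v)` are independent with common mean
`g(X_u)`, whence `E[f(X_u, X_v) f(X_u, X'_v)] = E[g(X_u)²]`; and `f(X'_u, X'_v)` is an independent
copy of `f(X_u, X_v)`, so the second product has mean `(E f)²`.
-/

open MeasureTheory ProbabilityTheory

namespace ProbabilityTheory

variable {Ω α β γ : Type*} {mΩ : MeasurableSpace Ω} [MeasurableSpace α] [MeasurableSpace β]
  [MeasurableSpace γ] {μ : Measure Ω} [IsFiniteMeasure μ] {X : Ω → α} {Y : Ω → β}

lemma IndepFun.prodMk_right_of_indepFun_prodMk {Z : Ω → γ} (hX : Measurable X)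
    (hY : Measurable Y) (hZ : Measurable Z) (hXY : IndepFun X Y μ)
    (hXYZ : IndepFun (fun ω => (X ω, Y ω)) Z μ) :
    IndepFun X (fun ω => (Y ω, Z ω)) μ := by
  have hYZ : IndepFun Y Z μ := hXYZ.comp measurable_snd measurable_id
  rw [indepFun_iff_map_prod_eq_prod_map_map hX.aemeasurable (hY.prodMk hZ).aemeasurable,
    hYZ.map_prod_eq_prod_map_map hY.aemeasurable hZ.aemeasurable, ← Measure.prodAssoc_prod,
    ← hXY.map_prod_eq_prod_map_map hX.aemeasurable hY.aemeasurable,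
    ← hXYZ.map_prod_eq_prod_map_map (hX.prodMk hY).aemeasurable hZ.aemeasurable,
    Measure.map_map MeasurableEquiv.prodAssoc.measurable ((hX.prodMk hY).prodMk hZ)]
  rfl

variable {E : Type*} [NormedAddCommGroup E] {h : α × β → E}

lemma IndepFun.integrable_prod_map_map (hX : Measurable X) (hY : Measurable Y)
    (hXY : IndepFun X Y μ) (hh : AEStronglyMeasurable h ((μ.map X).prod (μ.map Y)))
    (hint : Integrable (fun ω => h (X ω, Y ω)) μ) :
    Integrable h ((μ.map X).prod (μ.map Y)) := by
  rw [← hXY.map_prod_eq_prod_map_map hX.aemeasurable hY.aemeasurable] at hh ⊢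
  exact (integrable_map_measure hh (hX.prodMk hY).aemeasurable).mpr hint

lemma IndepFun.integral_comp_prodMk [NormedSpace ℝ E] (hX : Measurable X) (hY : Measurable Y)
    (hXY : IndepFun X Y μ) (hh : AEStronglyMeasurable h ((μ.map X).prod (μ.map Y)))
    (hint : Integrable (fun ω => h (X ω, Y ω)) μ) :
    ∫ ω, h (X ω, Y ω) ∂μ = ∫ x, ∫ y, h (x, y) ∂(μ.map Y) ∂(μ.map X) := by
  have hlaw := hXY.map_prod_eq_prod_map_map hX.aemeasurable hY.aemeasurable
  rw [← integral_prod _ (hXY.integrable_prod_map_map hX hY hh hint), ← hlaw,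
    integral_map (hX.prodMk hY).aemeasurable (hlaw ▸ hh)]

lemma IndepFun.condExp_comp_prodMk_ae_eq_s5 (hX : Measurable X) (hY : Measurable Y)
    (hXY : IndepFun X Y μ) {f : α × β → ℝ} (hf : StronglyMeasurable f)
    (hint : Integrable (fun ω => f (X ω, Y ω)) μ) :
    μ[fun ω => f (X ω, Y ω) | MeasurableSpace.comap X inferInstance]
      =ᵐ[μ] fun ω => ∫ y, f (X ω, y) ∂(μ.map Y) := by
  have hlaw := hXY.map_prod_eq_prod_map_map hX.aemeasurable hY.aemeasurable
  have hint' := hXY.integrable_prod_map_map hX hY hf.aestronglyMeasurable hint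
  have hg : StronglyMeasurable fun x => ∫ y, f (x, y) ∂(μ.map Y) := hf.integral_prod_right'
  refine (ae_eq_condExp_of_forall_setIntegral_eq hX.comap_le hint
    (fun s _ _ => ?_) ?_ ?_).symm
  · exact ((integrable_map_measure hg.aestronglyMeasurable hX.aemeasurable).mp
      hint'.integral_prod_left).integrableOn
  · rintro _ ⟨A, hA, rfl⟩ -
    calc ∫ ω in X ⁻¹' A, ∫ y, f (X ω, y) ∂(μ.map Y) ∂μ
        = ∫ x in A, ∫ y, f (x, y) ∂(μ.map Y) ∂(μ.map X) :=
          (setIntegral_map hA hg.aestronglyMeasurable hX.aemeasurable).symm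
      _ = ∫ p in A ×ˢ Set.univ, f p ∂((μ.map X).prod (μ.map Y)) := by
          rw [setIntegral_prod _ hint'.integrableOn, Measure.restrict_univ]
      _ = ∫ ω in (fun ω => (X ω, Y ω)) ⁻¹' (A ×ˢ Set.univ), f (X ω, Y ω) ∂μ := by
          rw [← hlaw]
          exact setIntegral_map (hA.prod .univ) (hlaw ▸ hf.aestronglyMeasurable)
            (hX.prodMk hY).aemeasurable
      _ = ∫ ω in X ⁻¹' A, f (X ω, Y ω) ∂μ := by
          rw [Set.mk_preimage_prod, Set.preimage_univ, Set.inter_univ]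
  · exact (hg.comp_measurable (comap_measurable X)).aestronglyMeasurable

lemma integral_mul_comp_prodMk_eq_integral_sq {Y' : Ω → β}
    (hX : Measurable X) (hY : Measurable Y) (hY' : Measurable Y') (hXY : IndepFun X Y μ)
    (hXYY' : IndepFun (fun ω => (X ω, Y ω)) Y' μ) (hid : IdentDistrib Y' Y μ μ)
    {f : α × β → ℝ} (hf : StronglyMeasurable f)
    (hint : Integrable (fun ω => f (X ω, Y ω) * f (X ω, Y' ω)) μ) :
    ∫ ω, f (X ω, Y ω) * f (X ω, Y' ω) ∂μ = ∫ ω, (∫ y, f (X ω, y) ∂(μ.map Y)) ^ 2 ∂μ := by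
  have hYY' : IndepFun Y Y' μ := hXYY'.comp measurable_snd measurable_id
  have hg : StronglyMeasurable fun x => ∫ y, f (x, y) ∂(μ.map Y) := hf.integral_prod_right'
  rw [(hXY.prodMk_right_of_indepFun_prodMk hX hY hY' hXYY').integral_comp_prodMk
      (h := fun p => f (p.1, p.2.1) * f (p.1, p.2.2)) hX (hY.prodMk hY') (by fun_prop) hint,
    hYY'.map_prod_eq_prod_map_map hY.aemeasurable hY'.aemeasurable, hid.map_eq,
    ← integral_map hX.aemeasurable (f := fun x => (∫ y, f (x, y) ∂(μ.map Y)) ^ 2)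
      (hg.pow 2).aestronglyMeasurable]
  congr with x
  rw [pow_two]
  exact integral_prod_mul (fun y => f (x, y)) (fun y => f (x, y))

end ProbabilityTheory

/-- **Pick-freeze identity for the numerator of the grouped first-order Sobol' index.**
Let `X_u, X_v, X'_u, X'_v` be mutually independent (encoded as a chain of independences),
with `X'_u` distributed as `X_u` and `X'_v` distributed as `X_v`, so that `(X'_u, X'_v)` is
an independent replicate of `(X_u, X_v)`.  Then
`Var( E[ f(X_u, X_v) | X_u ] ) = E[ f(X_u, X_v) · ( f(X_u, X'_v) − f(X'_u, X'_v) ) ]`. -/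
theorem pick_freeze_first_order_numerator
    {Ω U V : Type*} [MeasurableSpace Ω] [MeasurableSpace U] [MeasurableSpace V]
    {μ : Measure Ω} [IsProbabilityMeasure μ]
    (Xu Xu' : Ω → U) (Xv Xv' : Ω → V)
    (hXu : Measurable Xu) (hXu' : Measurable Xu')
    (hXv : Measurable Xv) (hXv' : Measurable Xv')
    -- mutual independence of `X_u`, `X_v`, `X'_u`, `X'_v`:
    (hUV : IndepFun Xu Xv μ)
    (hUVU' : IndepFun (fun ω => (Xu ω, Xv ω)) Xu' μ)
    (hUVU'V' : IndepFun (fun ω => ((Xu ω, Xv ω), Xu' ω)) Xv' μ)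
    -- `X'_u` and `X'_v` are replicates of `X_u` and `X_v`:
    (hidU : IdentDistrib Xu' Xu μ μ) (hidV : IdentDistrib Xv' Xv μ μ)
    (f : U × V → ℝ) (hf : Measurable f)
    (hL2 : MemLp (fun ω => f (Xu ω, Xv ω)) 2 μ) :
    variance (μ[fun ω => f (Xu ω, Xv ω) | MeasurableSpace.comap Xu inferInstance]) μ
      = ∫ ω, f (Xu ω, Xv ω) * (f (Xu ω, Xv' ω) - f (Xu' ω, Xv' ω)) ∂μ := by
  have hUVV' : IndepFun (fun ω => (Xu ω, Xv ω)) Xv' μ :=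
    hUVU'V'.comp measurable_fst measurable_id
  have hid_pick : IdentDistrib (fun ω => (Xu ω, Xv' ω)) (fun ω => (Xu ω, Xv ω)) μ μ :=
    (IdentDistrib.refl hXu.aemeasurable).prodMk hidV
      (hUVV'.comp measurable_fst measurable_id) hUV
  have hid_copy : IdentDistrib (fun ω => (Xu' ω, Xv' ω)) (fun ω => (Xu ω, Xv ω)) μ μ :=
    hidU.prodMk hidV (hUVU'V'.comp measurable_snd measurable_id) hUV
  have hindep_copy : IndepFun (fun ω => (Xu ω, Xv ω)) (fun ω => (Xu' ω, Xv' ω)) μ :=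
    hUVU'.prodMk_right_of_indepFun_prodMk (hXu.prodMk hXv) hXu' hXv' hUVU'V'
  have hce := hUV.condExp_comp_prodMk_ae_eq_s5 hXu hXv hf.stronglyMeasurable
    (hL2.integrable one_le_two)
  have hint_pick : Integrable (fun ω => f (Xu ω, Xv ω) * f (Xu ω, Xv' ω)) μ :=
    hL2.integrable_mul ((hid_pick.comp hf).memLp_iff.mpr hL2)
  have hint_copy : Integrable (fun ω => f (Xu ω, Xv ω) * f (Xu' ω, Xv' ω)) μ :=
    hL2.integrable_mul ((hid_copy.comp hf).memLp_iff.mpr hL2)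
  have hmean_copy : ∫ ω, f (Xu' ω, Xv' ω) ∂μ = ∫ ω, f (Xu ω, Xv ω) ∂μ :=
    (hid_copy.comp hf).integral_eq
  simp_rw [mul_sub]
  rw [variance_eq_sub (hL2.condExp one_le_two), integral_condExp hXu.comap_le,
    integral_congr_ae (hce.pow_const 2), integral_sub hint_pick hint_copy,
    integral_mul_comp_prodMk_eq_integral_sq hXu hXv hXv' hUV hUVV' hidV hf.stronglyMeasurable
      hint_pick,
    hindep_copy.integral_fun_comp_mul_comp (hXu.prodMk hXv).aemeasurable
      (hXu'.prodMk hXv').aemeasurable hf.aestronglyMeasurable hf.aestronglyMeasurable,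
    hmean_copy]
  simp only [Pi.pow_apply]
  ring
end

section
/- Let (Λ, 𝒜, μ) be a measure space (the parameter space with a σ-finite reference measure) and (D, ℬ, ν) a measure space (the output space with a σ-finite reference measure). Let π₀ : Λ → [0, ∞) be a probability density with respect to μ, let q : Λ → D be measurable, and suppose the pushforward under q of the measure π₀ · μ has density π_predict with respect to ν. Let π_target : D → [0, ∞) be a probability density with respect to ν such that π_target vanishes ν-almost everywhere on the set where π_predict vanishes (absolute continuity of the target with respect to the prediction). Define the data-consistent update density π_update(λ) = π₀(λ) · π_target(q(λ)) / π_predict(q(λ)) (interpreted as 0 when π_predict(q(λ)) = 0). Then for every measurable set A ⊆ D, ∫_{q⁻¹(A)} π_update dμ = ∫_A π_target dν; in particular, π_update is a probability density on Λ and the pushforward under q of the measure π_update · μ has density π_target. -/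
open MeasureTheory

/-- **Consistency of the data-consistent update** (data-consistent stochastic inversion).
Given an initial probability density `π₀` on the parameter space `Λ` (w.r.t. a σ-finite
reference measure `μ`), a measurable quantity-of-interest map `q : Λ → D`, a density
`π_predict` (w.r.t. a σ-finite reference measure `ν` on `D`) of the pushforward of `π₀ · μ`
under `q`, and a target probability density `π_target` vanishing ν-a.e. wherever `π_predict`
vanishes, the update `π_update(λ) = π₀(λ) · π_target(q(λ)) / π_predict(q(λ))` (with the
convention `x / 0 = 0` of `ℝ≥0`) satisfies `∫_{q⁻¹(A)} π_update dμ = ∫_A π_target dν` for all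
measurable `A`; in particular `π_update` is a probability density and the pushforward of
`π_update · μ` under `q` has density `π_target`. -/
theorem data_consistent_inversion
    {Λ D : Type*} [MeasurableSpace Λ] [MeasurableSpace D]
    (μ : Measure Λ) (ν : Measure D) [SigmaFinite μ] [SigmaFinite ν]
    (π₀ : Λ → NNReal) (hπ₀ : Measurable π₀)
    (hprob₀ : IsProbabilityMeasure (μ.withDensity fun l => (π₀ l : ENNReal)))
    (q : Λ → D) (hq : Measurable q)
    (πpredict : D → NNReal) (hpredict : Measurable πpredict)
    (hpush : (μ.withDensity fun l => (π₀ l : ENNReal)).map q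
      = ν.withDensity fun y => (πpredict y : ENNReal))
    (πtarget : D → NNReal) (htarget : Measurable πtarget)
    (hprobt : IsProbabilityMeasure (ν.withDensity fun y => (πtarget y : ENNReal)))
    (habs : ∀ᵐ y ∂ν, πpredict y = 0 → πtarget y = 0)
    (πupdate : Λ → NNReal)
    (hupdate : πupdate = fun l => π₀ l * πtarget (q l) / πpredict (q l)) :
    (∀ A : Set D, MeasurableSet A →
      ∫⁻ l in q ⁻¹' A, (πupdate l : ENNReal) ∂μ = ∫⁻ y in A, (πtarget y : ENNReal) ∂ν)
    ∧ IsProbabilityMeasure (μ.withDensity fun l => (πupdate l : ENNReal))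
    ∧ (μ.withDensity fun l => (πupdate l : ENNReal)).map q
        = ν.withDensity fun y => (πtarget y : ENNReal) := by
  set g : D → NNReal := fun y => πtarget y / πpredict y with hg_def
  have hg : Measurable fun y => ((g y : ENNReal)) :=
    (htarget.div hpredict).coe_nnreal_ennreal
  have key : ∀ A : Set D, MeasurableSet A →
      ∫⁻ l in q ⁻¹' A, (πupdate l : ENNReal) ∂μ = ∫⁻ y in A, (πtarget y : ENNReal) ∂ν := by
    intro A hA
    have h1 : ∫⁻ l in q ⁻¹' A, (πupdate l : ENNReal) ∂μ
        = ∫⁻ l in q ⁻¹' A, (π₀ l : ENNReal) * (g (q l) : ENNReal) ∂μ := by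
      apply lintegral_congr
      intro l
      simp only [hupdate, hg_def]
      rw [mul_div_assoc, ENNReal.coe_mul]
    rw [h1]
    have h2 : ∫⁻ l in q ⁻¹' A, (π₀ l : ENNReal) * (g (q l) : ENNReal) ∂μ
        = ∫⁻ l in q ⁻¹' A, ((g (q l) : ENNReal)) ∂(μ.withDensity fun l => (π₀ l : ENNReal)) :=
      (setLIntegral_withDensity_eq_setLIntegral_mul μ hπ₀.coe_nnreal_ennreal
        (hg.comp hq) (hq hA)).symm
    rw [h2]
    have h3 : ∫⁻ l in q ⁻¹' A, ((g (q l) : ENNReal)) ∂(μ.withDensity fun l => (π₀ l : ENNReal))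
        = ∫⁻ y in A, (g y : ENNReal) ∂((μ.withDensity fun l => (π₀ l : ENNReal)).map q) :=
      (setLIntegral_map hA hg hq).symm
    rw [h3, hpush,
      setLIntegral_withDensity_eq_setLIntegral_mul ν hpredict.coe_nnreal_ennreal hg hA]
    apply lintegral_congr_ae
    filter_upwards [ae_restrict_of_ae habs] with y hy
    simp only [Pi.mul_apply, hg_def]
    by_cases hp : πpredict y = 0
    · simp [hp, hy hp]
    · rw [← ENNReal.coe_mul, mul_comm, div_mul_cancel₀ _ hp]
  have huniv : (μ.withDensity fun l => (πupdate l : ENNReal)) Set.univ = 1 := by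
    have h := key Set.univ MeasurableSet.univ
    rw [Set.preimage_univ, Measure.restrict_univ, Measure.restrict_univ] at h
    have ht := hprobt.measure_univ
    rw [withDensity_apply _ MeasurableSet.univ, Measure.restrict_univ] at ht
    rw [withDensity_apply _ MeasurableSet.univ, Measure.restrict_univ, h]
    exact ht
  refine ⟨key, ⟨huniv⟩, ?_⟩
  have hmu : Measurable fun l => (πupdate l : ENNReal) := by
    rw [hupdate]
    exact ((hπ₀.mul (htarget.comp hq)).div (hpredict.comp hq)).coe_nnreal_ennreal
  ext A hA
  rw [Measure.map_apply hq hA, withDensity_apply _ (hq hA), withDensity_apply _ hA,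
    key A hA]
end
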